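/- Let X be an m×n complex matrix and let σ₁ ≥ σ₂ ≥ … ≥ σ_{min(m,n)} ≥ 0 be its singular values. For every integer k with 0 ≤ k ≤ min(m,n) and every m×n complex matrix B with rank(B) ≤ k, one has ‖X − B‖_F² ≥ Σ_{i>k} σᵢ²; moreover there exists an m×n complex matrix B̂ with rank(B̂) ≤ k (the truncated singular value decomposition of X, keeping only the k largest singular values) attaining ‖X − B̂‖_F² = Σ_{i>k} σᵢ². Hence the truncated SVD is a best rank-k approximation of X in the Frobenius norm. -/

import Mathlib

/-- The squared Frobenius norm of a complex matrix: `‖A‖_F² = Σᵢⱼ |aᵢⱼ|²`. -/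
noncomputable def frobeniusNormSq {m n : ℕ} (A : Matrix (Fin m) (Fin n) ℂ) : ℝ :=
  ∑ i, ∑ j, ‖A i j‖ ^ 2

open Matrix Finset in
/-- Frobenius norm squared as a trace. -/
lemma frobeniusNormSq_eq_trace {m n : ℕ} (A : Matrix (Fin m) (Fin n) ℂ) :
    (frobeniusNormSq A : ℂ) = (Aᴴ * A).trace := by
  rw [frobeniusNormSq]
  push_cast
  rw [Finset.sum_comm]
  simp only [Matrix.trace, Matrix.diag, Matrix.mul_apply, Matrix.conjTranspose_apply]
  refine Finset.sum_congr rfl fun j _ => Finset.sum_congr rfl fun i _ => ?_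
  rw [← Complex.ofReal_pow, Complex.sq_norm, Complex.normSq_eq_conj_mul_self]
  rfl

lemma frobeniusNormSq_nonneg {m n : ℕ} (A : Matrix (Fin m) (Fin n) ℂ) :
    0 ≤ frobeniusNormSq A := by
  unfold frobeniusNormSq
  apply Finset.sum_nonneg; intro i _
  apply Finset.sum_nonneg; intro j _
  positivity

open Matrix in
/-- Right multiplication by a coisometry (`V * Vᴴ = 1`) preserves the Frobenius norm. -/
lemma frobeniusNormSq_mul_coisometry {m n : ℕ} (A : Matrix (Fin m) (Fin n) ℂ)
    (V : Matrix (Fin n) (Fin n) ℂ) (hV : V * Vᴴ = 1) :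
    frobeniusNormSq (A * V) = frobeniusNormSq A := by
  have := frobeniusNormSq_eq_trace (A * V)
  rw [conjTranspose_mul] at this
  have h2 : (Vᴴ * Aᴴ) * (A * V) = Vᴴ * ((Aᴴ * A) * V) := by simp only [Matrix.mul_assoc]
  rw [h2, Matrix.trace_mul_comm, Matrix.mul_assoc, hV, Matrix.mul_one,
    ← frobeniusNormSq_eq_trace] at this
  exact_mod_cast this

open Matrix ComplexOrder MatrixOrder in
/-- The (real part of the) trace of a product of two PSD matrices is nonnegative. -/
lemma trace_mul_psd_nonneg {n : ℕ} {P R : Matrix (Fin n) (Fin n) ℂ}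
    (hP : P.PosSemidef) (hR : R.PosSemidef) : 0 ≤ (P * R).trace.re := by
  set S := CFC.sqrt P with hSdef
  set T := CFC.sqrt R with hTdef
  have hS : S * S = P := CFC.sqrt_mul_sqrt_self P hP.nonneg
  have hT : T * T = R := CFC.sqrt_mul_sqrt_self R hR.nonneg
  have hSh : Sᴴ = S := (CFC.sqrt_nonneg P).posSemidef.1
  have hTh : Tᴴ = T := (CFC.sqrt_nonneg R).posSemidef.1
  have e1 : (T * S)ᴴ * (T * S) = S * (T * T * S) := by
    rw [conjTranspose_mul, hSh, hTh]
    simp only [Matrix.mul_assoc]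
  have key : ((T * S)ᴴ * (T * S)).trace = (P * R).trace := by
    rw [e1, Matrix.trace_mul_comm,
      show T * T * S * S = (T * T) * (S * S) by simp only [Matrix.mul_assoc], hS, hT,
      Matrix.trace_mul_comm]
  rw [← key, ← frobeniusNormSq_eq_trace]
  simpa using frobeniusNormSq_nonneg (T * S)

open Matrix ComplexOrder in
/-- Frobenius norm does not increase after multiplying by an isometry (`Zᴴ * Z = 1`). -/
lemma frobeniusNormSq_mul_isometry_le {m n d : ℕ} (A : Matrix (Fin m) (Fin n) ℂ)
    (Z : Matrix (Fin n) (Fin d) ℂ) (hZ : Zᴴ * Z = 1) :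
    frobeniusNormSq (A * Z) ≤ frobeniusNormSq A := by
  set P : Matrix (Fin n) (Fin n) ℂ := Aᴴ * A with hPdef
  set R : Matrix (Fin n) (Fin n) ℂ := 1 - Z * Zᴴ with hRdef
  have hRh : Rᴴ = R := by
    simp [hRdef, conjTranspose_mul]
  have hRR : R * R = R := by
    simp only [hRdef, Matrix.mul_sub, Matrix.sub_mul, Matrix.one_mul, Matrix.mul_one]
    rw [show Z * Zᴴ * (Z * Zᴴ) = Z * ((Zᴴ * Z) * Zᴴ) by simp only [Matrix.mul_assoc], hZ, Matrix.one_mul]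
    abel
  have hRpsd : R.PosSemidef := by
    have := Matrix.posSemidef_conjTranspose_mul_self R
    rwa [hRh, hRR] at this
  have hPpsd : P.PosSemidef := Matrix.posSemidef_conjTranspose_mul_self A
  have htr : 0 ≤ (P * R).trace.re := trace_mul_psd_nonneg hPpsd hRpsd
  have h1 : (frobeniusNormSq (A * Z) : ℂ) = (P * (Z * Zᴴ)).trace := by
    rw [frobeniusNormSq_eq_trace, conjTranspose_mul,
      show Zᴴ * Aᴴ * (A * Z) = Zᴴ * (P * Z) by rw [hPdef]; simp only [Matrix.mul_assoc],
      Matrix.trace_mul_comm, Matrix.mul_assoc]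
  have h2 : (frobeniusNormSq A : ℂ) = P.trace := frobeniusNormSq_eq_trace A
  have h3 : P * R = P - P * (Z * Zᴴ) := by
    rw [hRdef, Matrix.mul_sub, Matrix.mul_one]
  have h4 : (P * R).trace.re = frobeniusNormSq A - frobeniusNormSq (A * Z) := by
    rw [h3, Matrix.trace_sub, ← h1, ← h2]
    simp [Complex.sub_re]
  linarith [h4 ▸ htr]

lemma le_one_of_sq_le_self {x : ℝ} (h0 : 0 ≤ x) (h : x ^ 2 ≤ x) : x ≤ 1 := by
  nlinarith

/-- Cardinality of the upper tail filter on `Fin n`. -/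
lemma card_filter_le_fin {n k : ℕ} (hk : k ≤ n) :
    (Finset.univ.filter (fun i : Fin n => k ≤ (i : ℕ))).card = n - k := by
  have : Finset.univ.filter (fun i : Fin n => k ≤ (i : ℕ)) =
      Finset.map ⟨fun j : Fin (n - k) => (⟨k + j, by omega⟩ : Fin n),
        fun a b hab => by
          simp only [Fin.mk.injEq] at hab
          exact Fin.ext (by omega)⟩ Finset.univ := by
    ext i
    simp only [Finset.mem_filter, Finset.mem_univ, true_and, Finset.mem_map,
      Function.Embedding.coeFn_mk]
    constructor
    · intro hi
      refine ⟨⟨(i : ℕ) - k, by omega⟩, ?_⟩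
      apply Fin.ext
      show k + ((i : ℕ) - k) = (i : ℕ)
      omega
    · rintro ⟨j, -, rfl⟩
      exact Nat.le_add_right _ _
  rw [this, Finset.card_map, Finset.card_univ, Fintype.card_fin]

/-- The key rearrangement-type inequality: if `a` is antitone and nonnegative and
`s` takes values in `[0,1]` with total mass at least `n - k`, then
`∑ aᵢ sᵢ` is at least the tail sum of `a` past index `k`. -/
lemma tail_sum_le_weighted_sum {n k : ℕ} (a s : Fin n → ℝ) (ha : Antitone a)
    (ha0 : ∀ i, 0 ≤ a i) (hs0 : ∀ i, 0 ≤ s i) (hs1 : ∀ i, s i ≤ 1)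
    (hsum : (n : ℝ) ≤ k + ∑ i, s i) :
    ∑ i ∈ Finset.univ.filter (fun i : Fin n => k ≤ (i : ℕ)), a i ≤ ∑ i, a i * s i := by
  by_cases hkn : n ≤ k
  · have hempty : Finset.univ.filter (fun i : Fin n => k ≤ (i : ℕ)) = ∅ := by
      apply Finset.filter_false_of_mem
      intro i _
      omega
    rw [hempty]
    simp only [Finset.sum_empty]
    exact Finset.sum_nonneg fun i _ => mul_nonneg (ha0 i) (hs0 i)
  push_neg at hkn
  set c : ℝ := a ⟨k, hkn⟩ with hc
  have hc0 : 0 ≤ c := ha0 _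
  set p : Fin n → Prop := fun i => k ≤ (i : ℕ) with hp
  have hsplit : ∀ f : Fin n → ℝ,
      (∑ i ∈ Finset.univ.filter p, f i) + (∑ i ∈ Finset.univ.filter (fun i => ¬ p i), f i)
        = ∑ i, f i := fun f => Finset.sum_filter_add_sum_filter_not _ _ _
  -- bounds on the two pieces
  have hcard : ((Finset.univ.filter p).card : ℝ) = (n : ℝ) - k := by
    rw [card_filter_le_fin hkn.le]
    push_cast [Nat.cast_sub hkn.le]
    ring
  have h1 : ∑ i ∈ Finset.univ.filter p, (a i - a i * s i)
      ≤ c * ∑ i ∈ Finset.univ.filter p, (1 - s i) := by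
    rw [Finset.mul_sum]
    apply Finset.sum_le_sum
    intro i hi
    have hip : k ≤ (i : ℕ) := (Finset.mem_filter.mp hi).2
    have hai : a i ≤ c := ha (by exact hip)
    have h1s : 0 ≤ 1 - s i := by linarith [hs1 i]
    calc a i - a i * s i = a i * (1 - s i) := by ring
      _ ≤ c * (1 - s i) := mul_le_mul_of_nonneg_right hai h1s
  have h2 : ∑ i ∈ Finset.univ.filter p, (1 - s i)
      ≤ ∑ i ∈ Finset.univ.filter (fun i => ¬ p i), s i := by
    have e1 : ∑ i ∈ Finset.univ.filter p, (1 - s i)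
        = ((Finset.univ.filter p).card : ℝ) - ∑ i ∈ Finset.univ.filter p, s i := by
      rw [Finset.sum_sub_distrib, Finset.sum_const, nsmul_eq_mul, mul_one]
    have e2 := hsplit s
    rw [e1, hcard]
    linarith
  have h3 : c * ∑ i ∈ Finset.univ.filter (fun i => ¬ p i), s i
      ≤ ∑ i ∈ Finset.univ.filter (fun i => ¬ p i), (a i * s i) := by
    rw [Finset.mul_sum]
    apply Finset.sum_le_sum
    intro i hi
    have hip : ¬ k ≤ (i : ℕ) := (Finset.mem_filter.mp hi).2
    have hle : (i : Fin n) ≤ ⟨k, hkn⟩ := by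
      change (i : ℕ) ≤ k
      omega
    have hai : c ≤ a i := ha hle
    exact mul_le_mul_of_nonneg_right hai (hs0 i)
  have h4 := hsplit (fun i => a i * s i)
  have h5 : ∑ i ∈ Finset.univ.filter p, (a i - a i * s i)
      = (∑ i ∈ Finset.univ.filter p, a i) - ∑ i ∈ Finset.univ.filter p, (a i * s i) :=
    Finset.sum_sub_distrib _ _
  have hmul : c * ∑ i ∈ Finset.univ.filter p, (1 - s i)
      ≤ c * ∑ i ∈ Finset.univ.filter (fun i => ¬ p i), s i :=
    mul_le_mul_of_nonneg_left h2 hc0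
  linarith


open Matrix in
lemma herm_conj {n : ℕ} (U Q : Matrix (Fin n) (Fin n) ℂ) (hQh : Qᴴ = Q) :
    (Uᴴ * Q * U)ᴴ = Uᴴ * Q * U := by
  calc (Uᴴ * Q * U)ᴴ = Uᴴ * Qᴴ * U := by
        rw [Matrix.conjTranspose_mul, Matrix.conjTranspose_mul,
          Matrix.conjTranspose_conjTranspose, Matrix.mul_assoc Uᴴ Qᴴ U]
    _ = Uᴴ * Q * U := by rw [hQh]

open Matrix in
lemma idem_conj {n : ℕ} (U Q : Matrix (Fin n) (Fin n) ℂ) (hU2 : U * Uᴴ = 1)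
    (hQQ : Q * Q = Q) : (Uᴴ * Q * U) * (Uᴴ * Q * U) = Uᴴ * Q * U := by
  calc (Uᴴ * Q * U) * (Uᴴ * Q * U)
      = Uᴴ * (Q * ((U * Uᴴ) * (Q * U))) := by simp only [Matrix.mul_assoc]
    _ = Uᴴ * (Q * (Q * U)) := by rw [hU2, Matrix.one_mul]
    _ = Uᴴ * ((Q * Q) * U) := by rw [Matrix.mul_assoc Q Q U]
    _ = Uᴴ * Q * U := by rw [hQQ, Matrix.mul_assoc Uᴴ Q U]

open Matrix in
lemma trace_conj {n : ℕ} (U M : Matrix (Fin n) (Fin n) ℂ) (hU2 : U * Uᴴ = 1) :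
    (Uᴴ * M * U).trace = M.trace := by
  rw [Matrix.trace_mul_cycle, hU2, Matrix.one_mul]

open Matrix in
lemma trace_sandwich {n : ℕ} (U D Q : Matrix (Fin n) (Fin n) ℂ) :
    ((U * D * Uᴴ) * Q).trace = (D * (Uᴴ * Q * U)).trace := by
  rw [Matrix.mul_assoc (U * D) Uᴴ Q, Matrix.mul_assoc U D (Uᴴ * Q),
    Matrix.trace_mul_comm U (D * (Uᴴ * Q)), Matrix.mul_assoc D (Uᴴ * Q) U]

open Matrix in
lemma sandwich3 {a b : ℕ} (D : Matrix (Fin a) (Fin a) ℂ) (Y : Matrix (Fin b) (Fin a) ℂ) :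
    Dᴴ * Yᴴ * (Y * D) = Dᴴ * (Yᴴ * Y) * D := by
  rw [Matrix.mul_assoc Dᴴ Yᴴ (Y * D), ← Matrix.mul_assoc Yᴴ Y D,
    ← Matrix.mul_assoc Dᴴ (Yᴴ * Y) D]

open Matrix in
lemma frob_mul_right_trace {m n d : ℕ} (X : Matrix (Fin m) (Fin n) ℂ)
    (Z : Matrix (Fin n) (Fin d) ℂ) :
    (frobeniusNormSq (X * Z) : ℂ) = ((Xᴴ * X) * (Z * Zᴴ)).trace := by
  rw [frobeniusNormSq_eq_trace, Matrix.conjTranspose_mul,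
    Matrix.mul_assoc Zᴴ Xᴴ (X * Z), ← Matrix.mul_assoc Xᴴ X Z,
    Matrix.trace_mul_comm Zᴴ ((Xᴴ * X) * Z), Matrix.mul_assoc (Xᴴ * X) Z Zᴴ]

open Matrix in
lemma diag_entry_sq {n : ℕ} (Q' : Matrix (Fin n) (Fin n) ℂ) (hh : Q'ᴴ = Q')
    (hi : Q' * Q' = Q') (j : Fin n) :
    Q' j j = ((∑ i, ‖Q' i j‖ ^ 2 : ℝ) : ℂ) := by
  have h2 : Q'ᴴ * Q' = Q' := by rw [hh, hi]
  conv_lhs => rw [← h2]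
  rw [Matrix.mul_apply]
  push_cast
  refine Finset.sum_congr rfl fun i _ => ?_
  rw [Matrix.conjTranspose_apply, ← Complex.ofReal_pow, Complex.sq_norm,
    Complex.normSq_eq_conj_mul_self]
  rfl

open Matrix ComplexOrder

/-- **Eckart–Young**: let `σ` list the singular values of `X` (the square roots of
the eigenvalues of `XᴴX`) in decreasing order.  For every `k ≤ min m n` and every
matrix `B` with `rank B ≤ k`, one has `‖X − B‖_F² ≥ Σ_{i ≥ k} σᵢ²` (0-based
indexing, i.e. the tail sum of the squared singular values past the `k` largest);
moreover some matrix `B̂` of rank at most `k` (the truncated SVD) attains this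
bound.  Hence the truncated SVD is a best rank-`k` approximation in the
Frobenius norm. -/
theorem eckart_young_best_rank_k_approximation
    {m n : ℕ} (X : Matrix (Fin m) (Fin n) ℂ)
    (σ : Fin n → ℝ) (hσ_dec : Antitone σ)
    (hσ : ∃ e : Equiv.Perm (Fin n), ∀ i,
      σ i = Real.sqrt ((Matrix.isHermitian_conjTranspose_mul_self X).eigenvalues (e i)))
    (k : ℕ) (hk : k ≤ min m n) :
    (∀ B : Matrix (Fin m) (Fin n) ℂ, B.rank ≤ k →
        ∑ i ∈ Finset.univ.filter (fun i : Fin n => k ≤ (i : ℕ)), σ i ^ 2 ≤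
          frobeniusNormSq (X - B)) ∧
      ∃ Bhat : Matrix (Fin m) (Fin n) ℂ, Bhat.rank ≤ k ∧
        frobeniusNormSq (X - Bhat) =
          ∑ i ∈ Finset.univ.filter (fun i : Fin n => k ≤ (i : ℕ)), σ i ^ 2 := by
  classical
  obtain ⟨e, hσe⟩ := hσ
  set H : Matrix (Fin n) (Fin n) ℂ := Xᴴ * X with hHdef
  have hH : H.IsHermitian := Matrix.isHermitian_conjTranspose_mul_self X
  set μ : Fin n → ℝ := hH.eigenvalues with hμdef
  set U : Matrix (Fin n) (Fin n) ℂ := (hH.eigenvectorUnitary : Matrix (Fin n) (Fin n) ℂ)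
    with hUdef
  have hU1 : Uᴴ * U = 1 := by
    rw [← Matrix.star_eq_conjTranspose]
    exact (Matrix.mem_unitaryGroup_iff').mp hH.eigenvectorUnitary.2
  have hU2 : U * Uᴴ = 1 := by
    rw [← Matrix.star_eq_conjTranspose]
    exact (Matrix.mem_unitaryGroup_iff).mp hH.eigenvectorUnitary.2
  have hμ0 : ∀ i, 0 ≤ μ i := fun i =>
    Matrix.eigenvalues_conjTranspose_mul_self_nonneg X i
  have hσ2 : ∀ i, σ i ^ 2 = μ (e i) := fun i => by
    rw [hσe i, Real.sq_sqrt (hμ0 _)]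
  have hσ0 : ∀ i, 0 ≤ σ i := fun i => by rw [hσe i]; exact Real.sqrt_nonneg _
  have hdiag : Uᴴ * H * U = Matrix.diagonal (fun j => (μ j : ℂ)) := by
    have := hH.conjStarAlgAut_star_eigenvectorUnitary
    rw [Unitary.conjStarAlgAut_star_apply, Matrix.star_eq_conjTranspose] at this
    exact this
  have hspec : H = U * Matrix.diagonal (fun j => (μ j : ℂ)) * Uᴴ := by
    rw [← hdiag]
    rw [show U * (Uᴴ * H * U) * Uᴴ = (U * Uᴴ) * H * (U * Uᴴ) by simp only [Matrix.mul_assoc], hU2]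
    simp
  constructor
  · -- Lower bound
    intro B hB
    -- kernel of B and its orthonormal basis
    set K : Submodule ℂ (EuclideanSpace ℂ (Fin n)) :=
      LinearMap.ker (Matrix.toEuclideanLin B) with hKdef
    set d₀ : ℕ := Module.finrank ℂ K with hd₀def
    have hrank : B.rank + d₀ = n := by
      have h1 : B.rank = Module.finrank ℂ (LinearMap.range (Matrix.toEuclideanLin B)) := by
        rw [Matrix.rank_eq_finrank_range_toLin B (PiLp.basisFun 2 ℂ (Fin m))
          (PiLp.basisFun 2 ℂ (Fin n))]
        rw [Matrix.toEuclideanLin_eq_toLin]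
      have h2 := LinearMap.finrank_range_add_finrank_ker (Matrix.toEuclideanLin B)
      rw [finrank_euclideanSpace_fin] at h2
      rw [h1, hd₀def, hKdef]
      exact h2
    have hd₀ : (n : ℝ) ≤ k + d₀ := by
      have : n ≤ k + d₀ := by omega
      exact_mod_cast this
    -- matrix of an orthonormal basis of the kernel
    set ob := stdOrthonormalBasis ℂ K with hobdef
    set Z : Matrix (Fin n) (Fin d₀) ℂ := fun r j => (ob j : EuclideanSpace ℂ (Fin n)) r
      with hZdef
    have hZZ : Zᴴ * Z = 1 := by
      ext i j
      have horth := ob.orthonormal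
      rw [orthonormal_iff_ite] at horth
      have h := horth i j
      rw [Submodule.coe_inner, PiLp.inner_apply] at h
      simp only [RCLike.inner_apply] at h
      rw [Matrix.mul_apply]
      simp only [Matrix.mul_apply, Matrix.conjTranspose_apply, Matrix.one_apply,
        Complex.star_def]
      exact Eq.trans (Finset.sum_congr rfl fun x _ => mul_comm _ _) h
    have hBZ : B * Z = 0 := by
      ext i j
      have hker : Matrix.toEuclideanLin B (ob j : EuclideanSpace ℂ (Fin n)) = 0 :=
        (LinearMap.mem_ker).mp (ob j).2
      have hmv : B.mulVec (fun r => (ob j : EuclideanSpace ℂ (Fin n)) r) = 0 := by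
        have := congrArg (WithLp.equiv 2 (Fin m → ℂ)) hker
        simp only [WithLp.equiv_apply, Matrix.ofLp_toEuclideanLin_apply] at this
        simpa using this
      rw [Matrix.mul_apply]
      simp only [Matrix.mul_apply, Matrix.zero_apply, hZdef]
      have := congrFun hmv i
      simpa [Matrix.mulVec, dotProduct] using this
    set Q : Matrix (Fin n) (Fin n) ℂ := Z * Zᴴ with hQdef
    have hQh : Qᴴ = Q := by simp [hQdef, Matrix.conjTranspose_mul]
    have hQQ : Q * Q = Q := by
      rw [hQdef, show Z * Zᴴ * (Z * Zᴴ) = Z * ((Zᴴ * Z) * Zᴴ) by simp only [Matrix.mul_assoc], hZZ, Matrix.one_mul]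
    have htrQ : Q.trace = (d₀ : ℂ) := by
      rw [hQdef, Matrix.trace_mul_comm, hZZ, Matrix.trace_one]
      simp
    -- step 1 : ‖X - B‖² ≥ ‖(X-B)Z‖² = ‖XZ‖²
    have step1 : frobeniusNormSq ((X - B) * Z) ≤ frobeniusNormSq (X - B) :=
      frobeniusNormSq_mul_isometry_le _ _ hZZ
    have step2 : (X - B) * Z = X * Z := by
      rw [Matrix.sub_mul, hBZ, sub_zero]
    -- step 3 : ‖XZ‖² = Re tr (D * Q') with Q' = Uᴴ Q U
    obtain ⟨Q', hQ'def⟩ : ∃ Q' : Matrix (Fin n) (Fin n) ℂ, Q' = Uᴴ * Q * U := ⟨_, rfl⟩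
    have hQ'h : Q'ᴴ = Q' := by rw [hQ'def]; exact herm_conj U Q hQh
    have hQ'Q' : Q' * Q' = Q' := by rw [hQ'def]; exact idem_conj U Q hU2 hQQ
    obtain ⟨t, ht_eq⟩ : ∃ t : Fin n → ℝ, ∀ j, t j = ∑ i, ‖Q' i j‖ ^ 2 :=
      ⟨_, fun _ => rfl⟩
    have ht0 : ∀ j, 0 ≤ t j := fun j => by
      rw [ht_eq]
      exact Finset.sum_nonneg fun i _ => by positivity
    have hQ'diag : ∀ j, Q' j j = ((t j : ℝ) : ℂ) := fun j => by
      rw [ht_eq]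
      exact diag_entry_sq Q' hQ'h hQ'Q' j
    have ht1 : ∀ j, t j ≤ 1 := by
      intro j
      have h1 : ‖Q' j j‖ ^ 2 ≤ t j := by
        rw [ht_eq]
        exact Finset.single_le_sum (f := fun i => ‖Q' i j‖ ^ 2)
          (fun i _ => by positivity) (Finset.mem_univ j)
      rw [hQ'diag j, Complex.norm_real, Real.norm_eq_abs, abs_of_nonneg (ht0 j)] at h1
      exact le_one_of_sq_le_self (ht0 j) h1
    have htsum : ∑ j, t j = (d₀ : ℝ) := by
      have h1 : Q'.trace = (d₀ : ℂ) := by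
        rw [hQ'def, trace_conj U Q hU2, htrQ]
      have h2 : Q'.trace = ((∑ j, t j : ℝ) : ℂ) := by
        simp only [Matrix.trace, Matrix.diag]
        push_cast
        exact Finset.sum_congr rfl fun j _ => hQ'diag j
      rw [h2] at h1
      exact_mod_cast h1
    have step3 : frobeniusNormSq (X * Z) = ∑ j, μ j * t j := by
      have h1 : (frobeniusNormSq (X * Z) : ℂ) = (H * Q).trace := by
        rw [hHdef, hQdef]
        exact frob_mul_right_trace X Z
      have h2 : (H * Q).trace = (Matrix.diagonal (fun j => (μ j : ℂ)) * Q').trace := by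
        rw [hspec, hQ'def]
        exact trace_sandwich U (Matrix.diagonal fun j => (μ j : ℂ)) Q
      have h3 : (Matrix.diagonal (fun j => (μ j : ℂ)) * Q').trace
          = ((∑ j, μ j * t j : ℝ) : ℂ) := by
        simp only [Matrix.trace, Matrix.diag, Matrix.diagonal_mul]
        push_cast
        refine Finset.sum_congr rfl fun j _ => ?_
        rw [hQ'diag j]
      have := h1.trans (h2.trans h3)
      exact_mod_cast this
    -- step 4 : combinatorial inequality
    have step4 : ∑ i ∈ Finset.univ.filter (fun i : Fin n => k ≤ (i : ℕ)), σ i ^ 2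
        ≤ ∑ j, μ j * t j := by
      have hreindex : ∑ j, μ j * t j = ∑ i, (σ i ^ 2) * t (e i) := by
        rw [← Equiv.sum_comp e (fun j => μ j * t j)]
        exact Finset.sum_congr rfl fun i _ => by rw [hσ2 i]
      rw [hreindex]
      apply tail_sum_le_weighted_sum (fun i => σ i ^ 2) (fun i => t (e i))
      · intro i j hij
        exact pow_le_pow_left₀ (hσ0 j) (hσ_dec hij) 2
      · intro i; exact sq_nonneg _
      · intro i; exact ht0 _
      · intro i; exact ht1 _
      · rw [Equiv.sum_comp e t, htsum]
        exact hd₀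
    calc ∑ i ∈ Finset.univ.filter (fun i : Fin n => k ≤ (i : ℕ)), σ i ^ 2
        ≤ ∑ j, μ j * t j := step4
      _ = frobeniusNormSq (X * Z) := step3.symm
      _ = frobeniusNormSq ((X - B) * Z) := by rw [step2]
      _ ≤ frobeniusNormSq (X - B) := step1
  · -- Existence: truncated SVD
    obtain ⟨d, hddef⟩ : ∃ d : Fin n → ℂ,
        d = fun j => if ((e.symm j : ℕ) < k) then 1 else 0 := ⟨_, rfl⟩
    have hd_apply : ∀ j, d j = if ((e.symm j : ℕ) < k) then 1 else 0 := fun j => by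
      rw [hddef]
    obtain ⟨d', hd'def⟩ : ∃ d' : Fin n → ℂ,
        d' = fun j => if (k ≤ (e.symm j : ℕ)) then 1 else 0 := ⟨_, rfl⟩
    have hd'_apply : ∀ j, d' j = if (k ≤ (e.symm j : ℕ)) then 1 else 0 := fun j => by
      rw [hd'def]
    refine ⟨X * U * Matrix.diagonal d * Uᴴ, ?_, ?_⟩
    · -- rank bound
      have h1 : (X * U * Matrix.diagonal d * Uᴴ).rank ≤ (Matrix.diagonal d).rank :=
        le_trans (Matrix.rank_mul_le_left _ _) (Matrix.rank_mul_le_right _ _)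
      have h2 : (Matrix.diagonal d).rank = Fintype.card {j // d j ≠ 0} :=
        Matrix.rank_diagonal d
      have h3 : Fintype.card {j // d j ≠ 0} = Fintype.card {i : Fin n // (i : ℕ) < k} := by
        apply Fintype.card_congr
        refine Equiv.subtypeEquiv e.symm fun j => ?_
        rw [hd_apply]
        by_cases hj : (e.symm j : ℕ) < k <;> simp [hj]
      have h4 : Fintype.card {i : Fin n // (i : ℕ) < k} = k := by
        rw [Fintype.card_subtype]
        have hkn : k ≤ n := hk.trans (min_le_right _ _)
        have hcardtail := card_filter_le_fin (n := n) (k := k) hkn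
        have hfeq : (Finset.univ.filter fun i : Fin n => ¬ ((i : ℕ) < k))
            = (Finset.univ.filter fun i : Fin n => k ≤ (i : ℕ)) := by
          ext i
          simp [not_lt]
        have hcompl : (Finset.univ.filter fun i : Fin n => (i : ℕ) < k).card
            + (Finset.univ.filter fun i : Fin n => k ≤ (i : ℕ)).card = n := by
          rw [← hfeq, Finset.card_filter_add_card_filter_not]
          simp
        omega
      omega
    · -- value of the Frobenius norm
      have hX : X = X * U * Uᴴ := by rw [Matrix.mul_assoc, hU2, Matrix.mul_one]
      have hdd : (1 : Matrix (Fin n) (Fin n) ℂ) - Matrix.diagonal d = Matrix.diagonal d' := by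
        ext i j
        by_cases hij : i = j
        · subst hij
          simp only [Matrix.sub_apply, Matrix.one_apply_eq, Matrix.diagonal_apply_eq,
            hd_apply, hd'_apply]
          by_cases hi : (e.symm i : ℕ) < k
          · simp [hi, Nat.not_le.mpr hi]
          · simp [hi, Nat.le_of_not_lt hi]
        · simp [Matrix.sub_apply, Matrix.one_apply_ne hij, Matrix.diagonal_apply_ne _ hij]
      have expand : X * U * (1 - Matrix.diagonal d) * Uᴴ
          = X * U * Uᴴ - X * U * Matrix.diagonal d * Uᴴ := by
        simp only [Matrix.mul_sub, Matrix.sub_mul, Matrix.mul_one]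
      have hXB : X - X * U * Matrix.diagonal d * Uᴴ = X * U * Matrix.diagonal d' * Uᴴ := by
        calc X - X * U * Matrix.diagonal d * Uᴴ
            = X * U * (1 - Matrix.diagonal d) * Uᴴ := by rw [expand, ← hX]
          _ = X * U * Matrix.diagonal d' * Uᴴ := by rw [hdd]
      have hUh : Uᴴ * (Uᴴ)ᴴ = 1 := by rw [Matrix.conjTranspose_conjTranspose, hU1]
      have hfrob1 : frobeniusNormSq (X - X * U * Matrix.diagonal d * Uᴴ)
          = frobeniusNormSq (X * U * Matrix.diagonal d') := by
        rw [hXB]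
        exact frobeniusNormSq_mul_coisometry _ _ hUh
      have hYY : (X * U)ᴴ * (X * U) = Matrix.diagonal (fun j => (μ j : ℂ)) := by
        rw [Matrix.conjTranspose_mul, sandwich3 U X, ← hHdef, hdiag]
      have hfrob2 : (frobeniusNormSq (X * U * Matrix.diagonal d') : ℂ)
          = ∑ j, (if (k ≤ (e.symm j : ℕ)) then (μ j : ℂ) else 0) := by
        rw [frobeniusNormSq_eq_trace, Matrix.conjTranspose_mul,
          sandwich3 (Matrix.diagonal d') (X * U), hYY, Matrix.diagonal_conjTranspose,
          Matrix.diagonal_mul_diagonal, Matrix.diagonal_mul_diagonal, Matrix.trace_diagonal]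
        refine Finset.sum_congr rfl fun j _ => ?_
        simp only [Pi.mul_apply, Pi.star_apply, hd'_apply]
        by_cases hj : k ≤ (e.symm j : ℕ) <;> simp [hj]
      have hsum : ∑ j, (if (k ≤ (e.symm j : ℕ)) then (μ j : ℂ) else 0)
          = ((∑ i ∈ Finset.univ.filter (fun i : Fin n => k ≤ (i : ℕ)), σ i ^ 2 : ℝ) : ℂ) := by
        rw [← Finset.sum_filter]
        push_cast
        refine (Finset.sum_equiv e ?_ ?_).symm
        · intro i
          simp only [Finset.mem_filter, Finset.mem_univ, true_and, Equiv.symm_apply_apply]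
        · intro i _
          rw [← Complex.ofReal_pow, hσ2 i]
      have hfinal : (frobeniusNormSq (X - X * U * Matrix.diagonal d * Uᴴ) : ℂ)
          = ((∑ i ∈ Finset.univ.filter (fun i : Fin n => k ≤ (i : ℕ)), σ i ^ 2 : ℝ) : ℂ) := by
        rw [hfrob1, hfrob2, hsum]
      exact_mod_cast hfinal
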